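/- Let Ω' ⊆ [n]×[n] be an index set with at most s elements in every row and at most s elements in every column (i.e., for each i, #{j : (i,j) ∈ Ω'} ≤ s, and for each j, #{i : (i,j) ∈ Ω'} ≤ s). Then for all A, B ∈ ℝ^{n×r}: ‖P_{Ω'}(ABᵀ)‖_F² ≤ s · min{ ‖A‖_F²·‖B‖²_{2,∞}, ‖A‖²_{2,∞}·‖B‖_F² }. -/

import Mathlib

/-!
By Cauchy–Schwarz, `(ABᵀ)ᵢⱼ² ≤ ‖Aᵢ‖² ‖Bⱼ‖² ≤ ‖Aᵢ‖² ‖B‖²_{2,∞}`. Summing over the at most `s`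
indices `j` kept in row `i`, and then over `i`, gives `s ‖A‖_F² ‖B‖²_{2,∞}`. The other bound is
the same argument for `(ABᵀ)ᵀ = BAᵀ`, with the column condition playing the role of the row one.
-/

open Matrix MeasureTheory
open scoped Classical

noncomputable section

/-- Euclidean norm of a finitely-indexed real vector. -/
def vecNorm {n : Type*} [Fintype n] (v : n → ℝ) : ℝ :=
  Real.sqrt (∑ j, (v j) ^ 2)

/-- Spectral norm (ℓ₂ operator norm) of a real matrix. -/
def specNorm {m n : Type*} [Fintype m] [Fintype n] (A : Matrix m n ℝ) : ℝ :=
  sSup {c : ℝ | ∃ x : n → ℝ, vecNorm x ≤ 1 ∧ c = vecNorm (A.mulVec x)}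

/-- Frobenius norm of a real matrix. -/
def frobNorm {m n : Type*} [Fintype m] [Fintype n] (A : Matrix m n ℝ) : ℝ :=
  Real.sqrt (∑ i, ∑ j, (A i j) ^ 2)

/-- Entrywise maximum norm ‖·‖_∞ of a real matrix. -/
def maxNorm {m n : Type*} [Fintype m] [Fintype n] (A : Matrix m n ℝ) : ℝ :=
  ⨆ i, ⨆ j, |A i j|

/-- Two-to-infinity norm ‖·‖_{2,∞}: maximum Euclidean norm of a row. -/
def twoInfNorm {m n : Type*} [Fintype m] [Fintype n] (A : Matrix m n ℝ) : ℝ :=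
  ⨆ i, vecNorm (fun j => A i j)

/-- Projection onto the entries indexed by `Ω'`. -/
def projS {n : ℕ} (Ω' : Set (Fin n × Fin n)) (Z : Matrix (Fin n) (Fin n) ℝ) :
    Matrix (Fin n) (Fin n) ℝ :=
  Matrix.of fun i j => if (i, j) ∈ Ω' then Z i j else 0

lemma mul_transpose_apply_sq_le {m n k : Type*} [Fintype k]
    (A : Matrix m k ℝ) (B : Matrix n k ℝ) (i : m) (j : n) :
    (A * Bᵀ) i j ^ 2 ≤ (∑ l, A i l ^ 2) * ∑ l, B j l ^ 2 := by
  simpa only [mul_apply, transpose_apply] using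
    Finset.sum_mul_sq_le_sq_mul_sq Finset.univ (A i) (B j)

variable {m n k : Type*} [Fintype m] [Fintype n] [Fintype k]

lemma frobNorm_sq (A : Matrix m n ℝ) : frobNorm A ^ 2 = ∑ i, ∑ j, A i j ^ 2 :=
  Real.sq_sqrt (by positivity)

lemma sum_sq_row_le_twoInfNorm_sq (A : Matrix m n ℝ) (i : m) :
    ∑ j, A i j ^ 2 ≤ twoInfNorm A ^ 2 := by
  have hrow : vecNorm (fun j => A i j) ≤ twoInfNorm A :=
    le_ciSup (f := fun i => vecNorm (fun j => A i j)) (Set.finite_range _).bddAbove i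
  calc ∑ j, A i j ^ 2 = vecNorm (fun j => A i j) ^ 2 := (Real.sq_sqrt (by positivity)).symm
    _ ≤ twoInfNorm A ^ 2 := pow_le_pow_left₀ (Real.sqrt_nonneg _) hrow 2

lemma sum_ite_mem_le_ncard_mul (T : Set n) (f : n → ℝ) {c : ℝ} (hf : ∀ j, f j ≤ c) :
    ∑ j, (if j ∈ T then f j else 0) ≤ T.ncard * c :=
  calc ∑ j, (if j ∈ T then f j else 0) ≤ ∑ j, (if j ∈ T then c else 0) :=
        Finset.sum_le_sum fun j _ => by split_ifs <;> simp [hf j]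
    _ = T.ncard * c := by simp [Finset.sum_ite, Set.ncard_eq_toFinset_card']

lemma sum_masked_sq_mul_transpose_le_of_row (S : Set (m × n)) (s : ℝ)
    (hrow : ∀ i, ({j | (i, j) ∈ S}.ncard : ℝ) ≤ s) (A : Matrix m k ℝ) (B : Matrix n k ℝ) :
    ∑ i, ∑ j, (if (i, j) ∈ S then (A * Bᵀ) i j ^ 2 else 0) ≤
      s * (frobNorm A ^ 2 * twoInfNorm B ^ 2) := by
  have hentry : ∀ i j, (A * Bᵀ) i j ^ 2 ≤ (∑ l, A i l ^ 2) * twoInfNorm B ^ 2 := fun i j =>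
    (mul_transpose_apply_sq_le A B i j).trans <|
      mul_le_mul_of_nonneg_left (sum_sq_row_le_twoInfNorm_sq B j) (by positivity)
  have hrowsum : ∀ i, ∑ j, (if (i, j) ∈ S then (A * Bᵀ) i j ^ 2 else 0) ≤
      s * ((∑ l, A i l ^ 2) * twoInfNorm B ^ 2) := fun i =>
    (sum_ite_mem_le_ncard_mul {j | (i, j) ∈ S} _ (hentry i)).trans <|
      mul_le_mul_of_nonneg_right (hrow i) (by positivity)
  calc _ ≤ ∑ i, s * ((∑ l, A i l ^ 2) * twoInfNorm B ^ 2) :=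
        Finset.sum_le_sum fun i _ => hrowsum i
    _ = s * (frobNorm A ^ 2 * twoInfNorm B ^ 2) := by
        rw [frobNorm_sq, ← Finset.mul_sum, ← Finset.sum_mul]

lemma sum_masked_sq_mul_transpose_le_of_col (S : Set (m × n)) (s : ℝ)
    (hcol : ∀ j, ({i | (i, j) ∈ S}.ncard : ℝ) ≤ s) (A : Matrix m k ℝ) (B : Matrix n k ℝ) :
    ∑ i, ∑ j, (if (i, j) ∈ S then (A * Bᵀ) i j ^ 2 else 0) ≤
      s * (twoInfNorm A ^ 2 * frobNorm B ^ 2) := by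
  have hswap := sum_masked_sq_mul_transpose_le_of_row (Prod.swap ⁻¹' S) s hcol B A
  rw [mul_comm (twoInfNorm A ^ 2), Finset.sum_comm]
  convert hswap using 4 with j _ i _
  · exact Iff.rfl
  · rw [← transpose_apply (A * Bᵀ), transpose_mul, transpose_transpose]

lemma frobNorm_projS_sq {n : ℕ} (Ω' : Set (Fin n × Fin n)) (Z : Matrix (Fin n) (Fin n) ℝ) :
    frobNorm (projS Ω' Z) ^ 2 = ∑ i, ∑ j, (if (i, j) ∈ Ω' then Z i j ^ 2 else 0) := by
  simp only [frobNorm_sq, projS, of_apply, ite_pow, ne_eq, OfNat.ofNat_ne_zero,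
    not_false_eq_true, zero_pow]

/-- If the index set `Ω'` has at most `s` elements in every row and every column, then
`‖P_{Ω'}(ABᵀ)‖_F² ≤ s · min{‖A‖_F²·‖B‖²_{2,∞}, ‖A‖²_{2,∞}·‖B‖_F²}`. -/
theorem stmt14 {n r : ℕ} (Ω' : Set (Fin n × Fin n)) (s : ℝ)
    (hrow : ∀ i : Fin n, (({j : Fin n | (i, j) ∈ Ω'}.ncard : ℝ)) ≤ s)
    (hcol : ∀ j : Fin n, (({i : Fin n | (i, j) ∈ Ω'}.ncard : ℝ)) ≤ s)
    (A B : Matrix (Fin n) (Fin r) ℝ) :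
    frobNorm (projS Ω' (A * Bᵀ)) ^ 2 ≤
      s * min (frobNorm A ^ 2 * twoInfNorm B ^ 2) (twoInfNorm A ^ 2 * frobNorm B ^ 2) := by
  rw [frobNorm_projS_sq]
  -- `s * min x y` is `s * x` or `s * y`; this avoids needing `0 ≤ s`, which fails when `n = 0`.
  rcases min_choice (frobNorm A ^ 2 * twoInfNorm B ^ 2) (twoInfNorm A ^ 2 * frobNorm B ^ 2)
    with h | h <;> rw [h]
  · exact sum_masked_sq_mul_transpose_le_of_row Ω' s hrow A B
  · exact sum_masked_sq_mul_transpose_le_of_col Ω' s hcol A B
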